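/- arXiv:1605.01240 — 2 statements merged into one kernel-verified Lean document; each statement's English description precedes it below -/
import Mathlib

section
/- (Theorem 3) Let Σ be a finite d-dimensional simplicial complex with β_d(Σ) ≥ 1 such that the space Z_d(Σ) of Z_2 d-cycles admits a 2-complete basis. Then g(Σ)·(β_d(Σ) + 1) ≤ 2·f_d(Σ), where g(Σ) is the girth of Σ. -/
open Finset

/-- A finite simplicial complex on a finite vertex type `V`:
a finite nonempty collection of nonempty finite sets (faces)
closed under taking nonempty subsets. -/
structure SComplex (V : Type) [DecidableEq V] [Fintype V] where
  faces : Finset (Finset V)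
  nonempty : faces.Nonempty
  no_empty : ∀ σ ∈ faces, σ ≠ ∅
  down_closed : ∀ σ ∈ faces, ∀ τ, τ ⊆ σ → τ ≠ ∅ → τ ∈ faces

namespace SComplex

variable {V : Type} [DecidableEq V] [Fintype V]

/-- The set of faces of dimension `i` (i.e. of cardinality `i+1`). -/
def facesDim (K : SComplex V) (i : ℕ) : Finset (Finset V) :=
  K.faces.filter (fun σ => σ.card = i + 1)

/-- `fnum K i` is the face number `f_i`. -/
def fnum (K : SComplex V) (i : ℕ) : ℕ := (K.facesDim i).card

/-- The space of `Z_2` `i`-chains: functions from the `i`-faces to `Z_2`. -/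
abbrev Chains (K : SComplex V) (i : ℕ) : Type := {σ // σ ∈ K.facesDim i} → ZMod 2

/-- The boundary map `∂_i : C_i → C_{i-1}` (and `∂_0 = 0`): the value of `∂ c` on an
`(i-1)`-face `τ` is the sum over `i`-faces `σ ⊇ τ` of `c σ`. -/
def boundary (K : SComplex V) (i : ℕ) : Chains K i →ₗ[ZMod 2] Chains K (i - 1) :=
  if i = 0 then 0 else
  { toFun := fun c τ =>
      ∑ σ : {σ // σ ∈ K.facesDim i}, if (τ : Finset V) ⊆ (σ : Finset V) then c σ else 0
    map_add' := by
      intro c d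
      funext τ
      show (∑ σ : {σ // σ ∈ K.facesDim i}, _) = _
      rw [Pi.add_apply, ← Finset.sum_add_distrib]
      apply Finset.sum_congr rfl
      intro σ _
      by_cases h : (τ : Finset V) ⊆ (σ : Finset V) <;> simp [h]
    map_smul' := by
      intro a c
      funext τ
      show (∑ σ : {σ // σ ∈ K.facesDim i}, _) = _
      rw [RingHom.id_apply, Pi.smul_apply, smul_eq_mul, Finset.mul_sum]
      apply Finset.sum_congr rfl
      intro σ _
      by_cases h : (τ : Finset V) ⊆ (σ : Finset V) <;> simp [h] }

/-- The `i`-th `Z_2` Betti number: `dim ker ∂_i − rank ∂_{i+1}`. -/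
noncomputable def betti (K : SComplex V) (i : ℕ) : ℕ :=
  Module.finrank (ZMod 2) (LinearMap.ker (K.boundary i)) -
    Module.finrank (ZMod 2) (LinearMap.range (K.boundary (i + 1)))

/-- The number of `i`-faces in the support of a chain. -/
def suppCard {K : SComplex V} {i : ℕ} (c : Chains K i) : ℕ :=
  (Finset.univ.filter (fun σ => c σ ≠ 0)).card

/-- The girth: the minimal support size of a nonzero `d`-cycle. -/
noncomputable def girth (K : SComplex V) (d : ℕ) : ℕ :=
  sInf {n | ∃ c : Chains K d, c ∈ LinearMap.ker (K.boundary d) ∧ c ≠ 0 ∧ suppCard c = n}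

/-- `Z_d(K)` admits an `m`-complete basis: a basis of the space of `d`-cycles such that every
`d`-face lies in the support of at most `m` basis elements. -/
def HasCompleteBasis (K : SComplex V) (d m : ℕ) : Prop :=
  ∃ (ι : Type) (_ : Fintype ι) (b : Module.Basis ι (ZMod 2) (LinearMap.ker (K.boundary d))),
    ∀ σ : {σ // σ ∈ K.facesDim d},
      (Finset.univ.filter (fun i : ι => (b i).1 σ ≠ 0)).card ≤ m

/-- `K` is `d`-dimensional: `d` is the maximal dimension of a face. -/
def IsDim (K : SComplex V) (d : ℕ) : Prop :=
  (∀ σ ∈ K.faces, σ.card ≤ d + 1) ∧ ∃ σ ∈ K.faces, σ.card = d + 1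

/-- `K` is pure `d`-dimensional: every face is contained in a `d`-face. -/
def IsPure (K : SComplex V) (d : ℕ) : Prop :=
  ∀ σ ∈ K.faces, ∃ τ ∈ K.faces, σ ⊆ τ ∧ τ.card = d + 1

/-- A `d`-dimensional complex is balanced if its vertices can be colored with `d+1` colors
so that the coloring is injective on every face. -/
def IsBalanced (K : SComplex V) (d : ℕ) : Prop :=
  ∃ coloring : V → Fin (d + 1), ∀ σ ∈ K.faces, Set.InjOn coloring (σ : Set V)

/-- The `d`-skeleton of `K`: all faces of dimension at most `d`. -/
def skeleton (K : SComplex V) (d : ℕ) : SComplex V where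
  faces := K.faces.filter (fun σ => σ.card ≤ d + 1)
  nonempty := by
    obtain ⟨σ, hσ⟩ := K.nonempty
    obtain ⟨v, hv⟩ := Finset.nonempty_iff_ne_empty.mpr (K.no_empty σ hσ)
    refine ⟨{v}, Finset.mem_filter.mpr ⟨K.down_closed σ hσ {v}
      (Finset.singleton_subset_iff.mpr hv) (Finset.singleton_ne_empty v), by simp⟩⟩
  no_empty := by
    intro σ hσ
    exact K.no_empty σ (Finset.mem_filter.mp hσ).1
  down_closed := by
    intro σ hσ τ hτσ hτ
    rw [Finset.mem_filter] at hσ ⊢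
    exact ⟨K.down_closed σ hσ.1 τ hτσ hτ, le_trans (Finset.card_le_card hτσ) hσ.2⟩

end SComplex

/-!
Take a `2`-complete basis `z₁, …, z_β` of `Z_d(Σ)` together with `z₀ = z₁ + ⋯ + z_β`. These
`β + 1` cycles are nonzero, so each has support of size at least `g(Σ)`. A `d`-face lies in the
support of at most two of them: if it lies in the supports of two basis cycles, it is cancelled
in their sum `z₀`. Double counting the pairs (face, cycle) gives `g (β + 1) ≤ 2 f_d`.
-/

open Finset SComplex

theorem ZMod.sum_eq_card_filter_ne_zero {ι : Type*} [Fintype ι] (f : ι → ZMod 2) :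
    ∑ i, f i = (#{i | f i ≠ 0} : ZMod 2) := by
  rw [← sum_filter_ne_zero, card_eq_sum_ones, Nat.cast_sum, Nat.cast_one]
  exact sum_congr rfl fun i hi => Fin.eq_one_of_ne_zero _ (mem_filter.mp hi).2

theorem ZMod.card_filter_ne_zero_add_ite_sum_ne_zero_le_two {ι : Type*} [Fintype ι]
    (f : ι → ZMod 2) (hf : #{i | f i ≠ 0} ≤ 2) :
    #{i | f i ≠ 0} + (if ∑ i, f i ≠ 0 then 1 else 0) ≤ 2 := by
  simp only [sum_eq_card_filter_ne_zero, ne_eq, ZMod.natCast_eq_zero_iff_even]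
  generalize #{i | f i ≠ 0} = k at hf ⊢
  interval_cases k <;> decide

theorem ZMod.sum_card_support_add_card_support_sum_le {ι X : Type*} [Fintype ι] [Fintype X]
    (v : ι → X → ZMod 2) (hv : ∀ x, #{i | v i x ≠ 0} ≤ 2) :
    ∑ i, #{x | v i x ≠ 0} + #{x | (∑ i, v i) x ≠ 0} ≤ 2 * Fintype.card X := by
  calc ∑ i, #{x | v i x ≠ 0} + #{x | (∑ i, v i) x ≠ 0}
      = ∑ x, (#{i | v i x ≠ 0} + if ∑ i, v i x ≠ 0 then 1 else 0) := by
        simp only [card_filter, Finset.sum_apply]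
        rw [sum_comm, sum_add_distrib]
    _ ≤ ∑ _x : X, 2 :=
        sum_le_sum fun x _ => card_filter_ne_zero_add_ite_sum_ne_zero_le_two _ (hv x)
    _ = 2 * Fintype.card X := by rw [sum_const, card_univ, smul_eq_mul, mul_comm]

theorem LinearIndependent.sum_ne_zero {ι R M : Type*} [Fintype ι] [Nonempty ι] [Ring R]
    [Nontrivial R] [AddCommGroup M] [Module R M] {v : ι → M} (hv : LinearIndependent R v) :
    ∑ i, v i ≠ 0 := by
  intro h
  have := Fintype.linearIndependent_iff.mp hv 1 (by simpa using h) (Classical.arbitrary ι)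
  exact one_ne_zero this

namespace SComplex

variable {V : Type} [DecidableEq V] [Fintype V]

theorem boundary_succ_eq_zero_of_isDim {K : SComplex V} {d : ℕ} (hdim : K.IsDim d) :
    K.boundary (d + 1) = 0 := by
  have : IsEmpty {σ // σ ∈ K.facesDim (d + 1)} := ⟨fun ⟨σ, hσ⟩ => by
    rw [facesDim, mem_filter] at hσ
    have := hdim.1 σ hσ.1
    omega⟩
  exact Subsingleton.elim _ _

theorem betti_eq_finrank_ker_of_isDim {K : SComplex V} {d : ℕ} (hdim : K.IsDim d) :
    K.betti d = Module.finrank (ZMod 2) (LinearMap.ker (K.boundary d)) := by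
  rw [betti, boundary_succ_eq_zero_of_isDim hdim, LinearMap.range_zero, finrank_bot,
    Nat.sub_zero]

theorem girth_le_suppCard {K : SComplex V} {d : ℕ} {c : Chains K d}
    (hc : c ∈ LinearMap.ker (K.boundary d)) (hc0 : c ≠ 0) : K.girth d ≤ suppCard c :=
  Nat.sInf_le ⟨c, hc, hc0, rfl⟩

end SComplex

/-- Theorem 3. -/
theorem girth_betti_ineq {V : Type} [DecidableEq V] [Fintype V] (d : ℕ)
    (K : SComplex V) (hdim : K.IsDim d)
    (hβ : 1 ≤ K.betti d) (hcb : K.HasCompleteBasis d 2) :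
    K.girth d * (K.betti d + 1) ≤ 2 * K.fnum d := by
  obtain ⟨ι, _, b, hb⟩ := hcb
  have hβι : K.betti d = Fintype.card ι := by
    rw [betti_eq_finrank_ker_of_isDim hdim, Module.finrank_eq_card_basis b]
  have : Nonempty ι := Fintype.card_pos_iff.mp (hβι ▸ hβ)
  have hsum : ∑ i, (b i : Chains K d) ≠ 0 := by
    rw [← Submodule.coe_sum, ne_eq, ZeroMemClass.coe_eq_zero]
    exact b.linearIndependent.sum_ne_zero
  calc K.girth d * (K.betti d + 1) = ∑ _i : ι, K.girth d + K.girth d := by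
        rw [hβι, mul_add_one, sum_const, card_univ, smul_eq_mul, mul_comm]
    _ ≤ ∑ i, suppCard (b i : Chains K d) + suppCard (∑ i, (b i : Chains K d)) := by
        refine add_le_add (sum_le_sum fun i _ => girth_le_suppCard (b i).2 ?_) ?_
        · exact (ZeroMemClass.coe_eq_zero).not.mpr (b.ne_zero i)
        · exact girth_le_suppCard (sum_mem fun i _ => (b i).2) hsum
    _ ≤ 2 * K.fnum d := by
        rw [fnum, ← Fintype.card_coe]
        exact ZMod.sum_card_support_add_card_support_sum_le _ hb
end

section
/- (Corollary 5) Let Σ be a finite d-dimensional simplicial complex (d ≥ 1) with β_d(Σ) ≥ 1 such that the space Z_d(Σ) of Z_2 d-cycles admits a 2-complete basis (by Theorem 2 of the paper, this holds whenever Σ is PL embeddable into ℝ^{d+1}). Then d·f_d(Σ) ≤ (d+2)·(f_{d−1}(Σ) − β_{d−1}(Σ) − 1). -/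
open Finset

/-!
Every nonzero `d`-cycle has at least `d + 2` faces: each ridge of a face in its support lies in a
second face of the support, and these faces are distinct for distinct ridges. Now sum all elements
of a 2-complete basis of `Z_d`. A face in the support of the sum lies in an odd number, hence
exactly one, of the supports of the basis cycles, so the `dim Z_d + 1` supports of the basis cycles
and of their sum cover every `d`-face at most twice: `(d + 2) (dim Z_d + 1) ≤ 2 f_d`. Rank–nullity
`f_d = rank ∂_d + dim Z_d` and `β_{d-1} + rank ∂_d ≤ f_{d-1}` turn this into the claim.
-/

open Finset Module

lemma Finset.subset_of_erase_subset_of_erase_subset {α : Type*} [DecidableEq α]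
    {s t : Finset α} {x y : α} (hxy : x ≠ y) (hx : s.erase x ⊆ t) (hy : s.erase y ⊆ t) :
    s ⊆ t := by
  intro a ha
  by_cases hax : a = x
  · exact hy (mem_erase.mpr ⟨hax ▸ hxy, ha⟩)
  · exact hx (mem_erase.mpr ⟨hax, ha⟩)

lemma ZMod.two_sum_eq_card_filter_ne_zero {ι : Type*} (s : Finset ι) (f : ι → ZMod 2) :
    ∑ i ∈ s, f i = (#{i ∈ s | f i ≠ 0} : ZMod 2) := by
  have hf : ∀ y : ZMod 2, y = if y ≠ 0 then 1 else 0 := by decide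
  rw [← sum_boole]
  exact sum_congr rfl fun i _ => hf (f i)

namespace SComplex

variable {V : Type} [DecidableEq V] [Fintype V] {K : SComplex V}

lemma card_eq_of_mem_facesDim {i : ℕ} {σ : Finset V} (h : σ ∈ K.facesDim i) :
    σ.card = i + 1 :=
  (mem_filter.mp h).2

lemma erase_mem_facesDim {d : ℕ} (hd : 1 ≤ d) {σ : Finset V} (h : σ ∈ K.facesDim d)
    {x : V} (hx : x ∈ σ) : σ.erase x ∈ K.facesDim (d - 1) := by
  obtain ⟨hσ, hcard⟩ := mem_filter.mp h
  have hcard' : (σ.erase x).card = d := by rw [card_erase_of_mem hx, hcard]; rfl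
  refine mem_filter.mpr ⟨K.down_closed σ hσ _ (erase_subset x σ) ?_, by omega⟩
  intro hempty
  rw [hempty, card_empty] at hcard'
  omega

lemma boundary_apply {i : ℕ} (hi : i ≠ 0) (c : Chains K i)
    (τ : {τ // τ ∈ K.facesDim (i - 1)}) :
    K.boundary i c τ =
      ∑ σ : {σ // σ ∈ K.facesDim i}, if (τ : Finset V) ⊆ σ then c σ else 0 := by
  rw [boundary, if_neg hi]
  rfl

lemma finrank_chains (i : ℕ) : finrank (ZMod 2) (Chains K i) = K.fnum i := by
  rw [finrank_pi, Fintype.card_coe]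
  rfl

lemma betti_add_finrank_range_le (i : ℕ) :
    K.betti i + finrank (ZMod 2) (LinearMap.range (K.boundary (i + 1))) ≤ K.fnum i := by
  have hker : finrank (ZMod 2) (LinearMap.ker (K.boundary i)) ≤ K.fnum i :=
    (Submodule.finrank_le _).trans_eq (finrank_chains i)
  have hrange : finrank (ZMod 2) (LinearMap.range (K.boundary (i + 1))) ≤ K.fnum i :=
    (Submodule.finrank_le _).trans_eq (finrank_chains (i + 1 - 1))
  unfold betti
  omega

lemma exists_ne_erase_subset_of_boundary_eq_zero {d : ℕ} (hd : 1 ≤ d) {c : Chains K d}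
    (hc : K.boundary d c = 0) {σ₀ : {σ // σ ∈ K.facesDim d}} (hσ₀ : c σ₀ ≠ 0)
    {x : V} (hx : x ∈ (σ₀ : Finset V)) :
    ∃ σ, σ ≠ σ₀ ∧ (σ₀ : Finset V).erase x ⊆ σ ∧ c σ ≠ 0 := by
  by_contra! h
  have hridge := congr_fun hc ⟨_, erase_mem_facesDim hd σ₀.2 hx⟩
  rw [boundary_apply (by omega), sum_eq_single σ₀ ?_ (by simp),
    if_pos (erase_subset _ _)] at hridge
  · exact hσ₀ hridge
  · intro σ _ hne
    split_ifs with hsub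
    exacts [h σ hne hsub, rfl]

theorem add_two_le_suppCard_of_boundary_eq_zero {d : ℕ} (hd : 1 ≤ d) {c : Chains K d}
    (hc : K.boundary d c = 0) (hc₀ : c ≠ 0) : d + 2 ≤ suppCard c := by
  obtain ⟨σ₀, hσ₀⟩ := Function.ne_iff.mp hc₀
  choose f hf_ne hf_sub hf_supp using
    fun x : (σ₀ : Finset V) => exists_ne_erase_subset_of_boundary_eq_zero hd hc hσ₀ x.2
  have hf_inj : Function.Injective f := by
    intro x y hxy
    by_contra hne
    have hsub : (σ₀ : Finset V) ⊆ f x :=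
      subset_of_erase_subset_of_erase_subset (Subtype.coe_ne_coe.mpr hne) (hf_sub x)
        (hxy ▸ hf_sub y)
    refine hf_ne x (Subtype.ext (eq_of_subset_of_card_le hsub ?_).symm)
    rw [card_eq_of_mem_facesDim (f x).2, card_eq_of_mem_facesDim σ₀.2]
  have hf_maps : univ.image f ⊆ ({σ | c σ ≠ 0} : Finset _).erase σ₀ := by
    intro σ hσ
    obtain ⟨x, -, rfl⟩ := mem_image.mp hσ
    simp [hf_ne x, hf_supp x]
  calc d + 2 = (univ.image f).card + 1 := by
        rw [card_image_of_injective _ hf_inj, card_univ, Fintype.card_coe,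
          card_eq_of_mem_facesDim σ₀.2]
    _ ≤ (({σ | c σ ≠ 0} : Finset _).erase σ₀).card + 1 := by gcongr
    _ = suppCard c := card_erase_add_one (by simpa using hσ₀)

lemma sum_suppCard_eq_sum_card_filter {ι : Type*} [Fintype ι] {i : ℕ} (v : ι → Chains K i) :
    ∑ j, suppCard (v j) = ∑ σ, #{j | v j σ ≠ 0} := by
  simp only [suppCard, card_filter]
  exact sum_comm

theorem add_two_mul_finrank_add_one_le {d : ℕ} (hd : 1 ≤ d) (hcb : K.HasCompleteBasis d 2)
    (hZ : 0 < finrank (ZMod 2) (LinearMap.ker (K.boundary d))) :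
    (d + 2) * (finrank (ZMod 2) (LinearMap.ker (K.boundary d)) + 1) ≤ 2 * K.fnum d := by
  obtain ⟨ι, _, b, hb⟩ := hcb
  have : Nontrivial (LinearMap.ker (K.boundary d)) := finrank_pos_iff.mp hZ
  have : Nonempty ι := b.index_nonempty
  set cover : {σ // σ ∈ K.facesDim d} → ℕ := fun σ => #{j | (b j).1 σ ≠ 0}
  set z : LinearMap.ker (K.boundary d) := ∑ j, b j
  have hz : z ≠ 0 := by
    intro h
    have := congr_arg (fun y => b.repr y (Classical.arbitrary ι)) h
    simp [z, map_sum] at this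
  have hz_apply (σ) : z.1 σ = (cover σ : ZMod 2) := by
    rw [← ZMod.two_sum_eq_card_filter_ne_zero]
    simp [z]
  have hcover (σ) : cover σ + (if z.1 σ ≠ 0 then 1 else 0) ≤ 2 := by
    have hle : cover σ ≤ 2 := hb σ
    split_ifs with hσ
    · have : cover σ ≠ 2 := fun h => hσ (by rw [hz_apply, h]; rfl)
      omega
    · omega
  have hsupp {y : LinearMap.ker (K.boundary d)} (hy : y ≠ 0) : d + 2 ≤ suppCard y.1 :=
    add_two_le_suppCard_of_boundary_eq_zero hd y.2 (by simpa using hy)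
  calc (d + 2) * (finrank (ZMod 2) (LinearMap.ker (K.boundary d)) + 1)
      = ∑ _j : ι, (d + 2) + (d + 2) := by
        rw [finrank_eq_card_basis b, sum_const, card_univ, smul_eq_mul]; ring
    _ ≤ ∑ j, suppCard (b j).1 + suppCard z.1 :=
        add_le_add (sum_le_sum fun j _ => hsupp (b.ne_zero j)) (hsupp hz)
    _ = ∑ σ, (cover σ + if z.1 σ ≠ 0 then 1 else 0) := by
        rw [sum_suppCard_eq_sum_card_filter, sum_add_distrib, suppCard, card_filter]
    _ ≤ ∑ _σ : {σ // σ ∈ K.facesDim d}, 2 := sum_le_sum fun σ _ => hcover σ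
    _ = 2 * K.fnum d := by
        rw [sum_const, card_univ, Fintype.card_coe, smul_eq_mul, mul_comm]; rfl

end SComplex

open SComplex
theorem cor5_general {V : Type} [DecidableEq V] [Fintype V] (d : ℕ) (hd : 1 ≤ d)
    (K : SComplex V)
    (hβ : 1 ≤ K.betti d) (hcb : K.HasCompleteBasis d 2) :
    (d : ℤ) * (K.fnum d : ℤ) ≤
      ((d : ℤ) + 2) * ((K.fnum (d - 1) : ℤ) - (K.betti (d - 1) : ℤ) - 1) := by
  have hZ : 0 < finrank (ZMod 2) (LinearMap.ker (K.boundary d)) :=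
    hβ.trans (Nat.sub_le _ _)
  have hcover := add_two_mul_finrank_add_one_le hd hcb hZ
  have hrank_nullity := LinearMap.finrank_range_add_finrank_ker (K.boundary d)
  rw [finrank_chains] at hrank_nullity
  have hbetti := betti_add_finrank_range_le (K := K) (d - 1)
  rw [Nat.sub_add_cancel hd] at hbetti
  nlinarith

/-- Corollary 5. -/
theorem cor5 {V : Type} [DecidableEq V] [Fintype V] (d : ℕ) (hd : 1 ≤ d)
    (K : SComplex V) (hdim : K.IsDim d)
    (hβ : 1 ≤ K.betti d) (hcb : K.HasCompleteBasis d 2) :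
    (d : ℤ) * (K.fnum d : ℤ) ≤
      ((d : ℤ) + 2) * ((K.fnum (d - 1) : ℤ) - (K.betti (d - 1) : ℤ) - 1) :=
  cor5_general d hd K hβ hcb
end
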